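/- For every real ε > 0 there exists a positive integer l₀ such that for every integer l ≥ l₀ and all positive integers j, k: if j ≠ k then T(l,j,k) < ε·(A(l,j,k) + T(l,j,k)), and A(l,j,j) < ε·(A(l,j,j) + T(l,j,j)). In other words, by tuning the constant l, the conditional probability (given that the processing of a transition-error claim halts) of reaching the incorrect outcome can be made smaller than any desired ε > 0, both when the claim is incorrect (j ≠ k) and when it is correct (j = k). -/

import Mathlib

open Filter

noncomputable def A (l j k : ℕ) : ℝ :=
  (2:ℝ) ^ (-(4 * (l:ℤ) * j + l)) + (1 - (2:ℝ) ^ (-(4 * (l:ℤ) * j + l))) * (2:ℝ) ^ (-(4 * (l:ℤ) * k + l))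

noncomputable def T (l j k : ℕ) : ℝ :=
  (1 - A l j k) * (2:ℝ) ^ (-(2 * (l:ℤ) * (j + k)))

/-!
Write `p_j = 2^{-(4lj+l)}` and `c = 2^{-2l(j+k)}`, so that `A = p_j + (1 - p_j) p_k` and
`T = (1 - A) c`. If `j < k` then `c ≤ 2^{-l} p_j ≤ 2^{-l} A`, so `T ≤ 2^{-l} A`. If `j = k`
then `p_j = 2^{-l} c` exactly, while `A ≤ 2 p_j ≤ 1/2` forces `T ≥ c / 2`; hence
`A ≤ 4 · 2^{-l} T`. Both error ratios are therefore `O(2^{-l})`.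
-/

section AcceptEither

variable {p q : ℝ}

lemma le_add_one_sub_mul (hp : p ≤ 1) (hq : 0 ≤ q) : p ≤ p + (1 - p) * q := by
  nlinarith

lemma add_one_sub_mul_le_one (hp : p ≤ 1) (hq : q ≤ 1) : p + (1 - p) * q ≤ 1 := by
  nlinarith

lemma add_one_sub_mul_self_le (hp : 0 ≤ p) : p + (1 - p) * p ≤ 2 * p := by
  nlinarith

end AcceptEither

lemma lt_mul_add_of_le_mul {x y δ ε : ℝ} (hx : 0 ≤ x) (hy : 0 < y) (hxy : x ≤ δ * y)
    (hδε : δ < ε) : x < ε * (y + x) := by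
  have hε : 0 < ε := (nonneg_of_mul_nonneg_left (hx.trans hxy) hy).trans_lt hδε
  calc x ≤ δ * y := hxy
    _ < ε * y := mul_lt_mul_of_pos_right hδε hy
    _ ≤ ε * (y + x) := by rw [mul_add]; exact le_add_of_nonneg_right (mul_nonneg hε.le hx)

noncomputable def acceptProb (l j : ℕ) : ℝ :=
  (2:ℝ) ^ (-(4 * (l:ℤ) * j + l))

section Probabilities

variable (l j k : ℕ)

lemma A_eq : A l j k = acceptProb l j + (1 - acceptProb l j) * acceptProb l k := rfl

lemma acceptProb_pos : 0 < acceptProb l j := by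
  unfold acceptProb; positivity

lemma acceptProb_le_one : acceptProb l j ≤ 1 :=
  zpow_le_one_of_nonpos₀ one_le_two (by simp only [neg_nonpos]; positivity)

lemma A_comm : A l j k = A l k j := by
  simp only [A_eq]; ring

lemma T_comm : T l j k = T l k j := by
  unfold T; rw [A_comm, add_comm (j : ℤ)]

lemma acceptProb_le_A : acceptProb l j ≤ A l j k :=
  le_add_one_sub_mul (acceptProb_le_one l j) (acceptProb_pos l k).le

lemma A_pos : 0 < A l j k :=
  (acceptProb_pos l j).trans_le (acceptProb_le_A l j k)

lemma A_le_one : A l j k ≤ 1 :=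
  add_one_sub_mul_le_one (acceptProb_le_one l j) (acceptProb_le_one l k)

lemma T_nonneg : 0 ≤ T l j k :=
  mul_nonneg (sub_nonneg.2 (A_le_one l j k)) (by positivity)

lemma T_le : T l j k ≤ (2:ℝ) ^ (-(2 * (l:ℤ) * (j + k))) :=
  mul_le_of_le_one_left (by positivity) (by linarith [A_pos l j k])

lemma T_le_two_zpow_neg_mul_A_of_lt {l j k : ℕ} (hjk : j < k) :
    T l j k ≤ (2:ℝ) ^ (-(l:ℤ)) * A l j k := by
  have hexp : -(2 * (l:ℤ) * (j + k)) ≤ -(l:ℤ) + -(4 * (l:ℤ) * j + l) := by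
    have : (j:ℤ) + 1 ≤ k := by exact_mod_cast hjk
    nlinarith
  calc T l j k ≤ (2:ℝ) ^ (-(2 * (l:ℤ) * (j + k))) := T_le l j k
    _ ≤ (2:ℝ) ^ (-(l:ℤ)) * acceptProb l j := by
      rw [acceptProb, ← zpow_add₀ two_ne_zero]
      exact zpow_le_zpow_right₀ one_le_two hexp
    _ ≤ (2:ℝ) ^ (-(l:ℤ)) * A l j k := by gcongr; exact acceptProb_le_A l j k

lemma T_le_two_zpow_neg_mul_A {l j k : ℕ} (hjk : j ≠ k) :
    T l j k ≤ (2:ℝ) ^ (-(l:ℤ)) * A l j k := by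
  rcases hjk.lt_or_gt with h | h
  · exact T_le_two_zpow_neg_mul_A_of_lt h
  · rw [T_comm, A_comm]; exact T_le_two_zpow_neg_mul_A_of_lt h

lemma acceptProb_eq_two_zpow_neg_mul :
    acceptProb l j = (2:ℝ) ^ (-(l:ℤ)) * (2:ℝ) ^ (-(2 * (l:ℤ) * (j + j))) := by
  rw [acceptProb, ← zpow_add₀ two_ne_zero]; ring_nf

lemma acceptProb_le_quarter {l j : ℕ} (hl : 0 < l) (hj : 0 < j) : acceptProb l j ≤ 1 / 4 := by
  have hexp : -(4 * (l:ℤ) * j + l) ≤ -2 := by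
    have : (1:ℤ) ≤ l := by exact_mod_cast hl
    have : (1:ℤ) ≤ j := by exact_mod_cast hj
    nlinarith
  calc acceptProb l j ≤ (2:ℝ) ^ (-2:ℤ) := zpow_le_zpow_right₀ one_le_two hexp
    _ = 1 / 4 := by norm_num

lemma A_le_four_mul_two_zpow_neg_mul_T {l j : ℕ} (hl : 0 < l) (hj : 0 < j) :
    A l j j ≤ 4 * (2:ℝ) ^ (-(l:ℤ)) * T l j j := by
  have hp := acceptProb_le_quarter hl hj
  have hA : A l j j ≤ 2 * acceptProb l j :=
    add_one_sub_mul_self_le (acceptProb_pos l j).le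
  have hT : (2:ℝ) ^ (-(2 * (l:ℤ) * (j + j))) ≤ 2 * T l j j := by
    have hc : (0:ℝ) < (2:ℝ) ^ (-(2 * (l:ℤ) * (j + j))) := by positivity
    unfold T; nlinarith
  calc A l j j ≤ 2 * acceptProb l j := hA
    _ = 2 * (2:ℝ) ^ (-(l:ℤ)) * (2:ℝ) ^ (-(2 * (l:ℤ) * (j + j))) := by
      rw [acceptProb_eq_two_zpow_neg_mul]; ring
    _ ≤ 2 * (2:ℝ) ^ (-(l:ℤ)) * (2 * T l j j) := by gcongr
    _ = 4 * (2:ℝ) ^ (-(l:ℤ)) * T l j j := by ring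

lemma T_pos {l j : ℕ} (hl : 0 < l) (hj : 0 < j) : 0 < T l j j :=
  pos_of_mul_pos_right ((A_pos l j j).trans_le (A_le_four_mul_two_zpow_neg_mul_T hl hj))
    (by positivity)

end Probabilities

lemma eventually_four_mul_two_zpow_neg_lt {ε : ℝ} (hε : 0 < ε) :
    ∀ᶠ l : ℕ in atTop, 4 * (2:ℝ) ^ (-(l:ℤ)) < ε := by
  have h : Tendsto (fun l : ℕ => 4 * ((1:ℝ) / 2) ^ l) atTop (nhds 0) := by
    simpa using (tendsto_pow_atTop_nhds_zero_of_lt_one (r := (1:ℝ) / 2) (by norm_num) (by norm_num)).const_mul 4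
  filter_upwards [h.eventually_lt_const hε] with l hl
  simpa [zpow_neg, zpow_natCast] using hl

theorem stmt9 (ε : ℝ) (hε : 0 < ε) :
    ∃ l₀ : ℕ, 0 < l₀ ∧ ∀ l : ℕ, l₀ ≤ l → ∀ j k : ℕ, 0 < j → 0 < k →
      (j ≠ k → T l j k < ε * (A l j k + T l j k)) ∧
        A l j j < ε * (A l j j + T l j j) := by
  obtain ⟨l₀, hl₀⟩ :=
    ((eventually_four_mul_two_zpow_neg_lt hε).and (eventually_gt_atTop 0)).exists_forall_of_atTop
  refine ⟨l₀, (hl₀ l₀ le_rfl).2, fun l hl j k hj _ => ⟨fun hjk => ?_, ?_⟩⟩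
  · obtain ⟨hsmall, -⟩ := hl₀ l hl
    exact lt_mul_add_of_le_mul (T_nonneg l j k) (A_pos l j k) (T_le_two_zpow_neg_mul_A hjk)
      (by linarith [(by positivity : (0:ℝ) < (2:ℝ) ^ (-(l:ℤ)))])
  · obtain ⟨hsmall, hlpos⟩ := hl₀ l hl
    rw [add_comm]
    exact lt_mul_add_of_le_mul (A_pos l j j).le (T_pos hlpos hj)
      (A_le_four_mul_two_zpow_neg_mul_T hlpos hj) hsmall
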